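/- Let X_t be a standard one-dimensional Brownian motion and T_b its first passage time to level b. There exists a universal constant c > 0 such that for all 0 < b < ℓ with ρ₁ := b/ℓ ≤ 1/2 and all t > 0, the Brownian bridge probability P[ (ρ₁t)/2 < T_b < ρ₁t | X_0 = 0, X_t = ℓ ] is at least c·min(1, √(bℓ/t)). -/

import Mathlib

/-!
Completing the square, `(ℓ - b)² / (t - s) + b² / s = ℓ² / t + (b t - ℓ s)² / (t s (t - s))`, so
the integrand is `p_t(ℓ) · (b / s) · p_s(0) · exp (-(b t - ℓ s)² / (2 t s (t - s)))` up to a factor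
`√(t / (t - s)) ≥ 1`. The bridge reaches `b` around `d = b t / ℓ ≤ t / 2`, and on the window
`[d - ε d, d]` with `ε = min (1/2) √(t / (b ℓ))` the remaining exponent is at most `2`. The window
thus carries at least `ε d · (ℓ / t) · e⁻² p_d(0) p_t(ℓ) = ε √(b ℓ / t) e⁻² p_t(ℓ) / √(2π)`, and
`ε √(b ℓ / t) ≥ min 1 √(b ℓ / t) / 2`.
-/

open Real intervalIntegral

noncomputable def heatKernel (d : ℕ) (t x : ℝ) : ℝ :=
  (2 * Real.pi * t) ^ (-(d : ℝ) / 2) * Real.exp (-x ^ 2 / (2 * t))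

/-- First passage time density of standard Brownian motion from 0 to level x:
`q(x,t) = (x/t) p_t^{(1)}(x)`. -/
noncomputable def fpd (x t : ℝ) : ℝ := (x / t) * heatKernel 1 t x

open Set MeasureTheory

lemma heatKernel_nonneg (d : ℕ) {u : ℝ} (hu : 0 ≤ u) (x : ℝ) : 0 ≤ heatKernel d u x := by
  unfold heatKernel
  positivity

lemma heatKernel_one_eq {u : ℝ} (hu : 0 ≤ u) (x : ℝ) :
    heatKernel 1 u x = (√(2 * π * u))⁻¹ * exp (-x ^ 2 / (2 * u)) := by
  rw [heatKernel, show -((1 : ℕ) : ℝ) / 2 = -(1 / 2) by norm_num, rpow_neg (by positivity),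
    ← sqrt_eq_rpow]

lemma continuousOn_heatKernel (d : ℕ) (x : ℝ) :
    ContinuousOn (fun u => heatKernel d u x) (Ioi 0) := by
  unfold heatKernel
  refine ContinuousOn.mul ?_ ?_
  · exact ContinuousOn.rpow_const (by fun_prop) fun u hu => Or.inl (by simp at hu; positivity)
  · exact ContinuousOn.rexp (ContinuousOn.div (by fun_prop) (by fun_prop)
      fun u hu => by simp at hu; positivity)

lemma heatKernel_zero_antitoneOn (d : ℕ) : AntitoneOn (fun u => heatKernel d u 0) (Ioi 0) := by
  intro s hs u hu hsu
  simp only [heatKernel, ne_eq, OfNat.ofNat_ne_zero, not_false_eq_true, zero_pow, neg_zero,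
    zero_div, exp_zero, mul_one]
  exact rpow_le_rpow_of_nonpos (by simp at hs; positivity) (by gcongr)
    (by simp only [neg_div, neg_nonpos]; positivity)

lemma heatKernel_mul_heatKernel_ge {s t : ℝ} (hs : 0 < s) (hst : s < t) (b ℓ : ℝ) :
    heatKernel 1 t ℓ * heatKernel 1 s 0 * exp (-(b * t - ℓ * s) ^ 2 / (2 * t * s * (t - s))) ≤
      heatKernel 1 (t - s) (ℓ - b) * heatKernel 1 s b := by
  have ht : 0 < t := hs.trans hst
  have hts : 0 < t - s := sub_pos.2 hst
  have hexponent : -ℓ ^ 2 / (2 * t) + -(b * t - ℓ * s) ^ 2 / (2 * t * s * (t - s)) =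
      -(ℓ - b) ^ 2 / (2 * (t - s)) + -b ^ 2 / (2 * s) := by
    field_simp
    ring
  simp only [heatKernel_one_eq ht.le, heatKernel_one_eq hs.le, heatKernel_one_eq hts.le]
  calc (√(2 * π * t))⁻¹ * exp (-ℓ ^ 2 / (2 * t)) * ((√(2 * π * s))⁻¹ * exp (-0 ^ 2 / (2 * s))) *
        exp (-(b * t - ℓ * s) ^ 2 / (2 * t * s * (t - s)))
      = (√(2 * π * t))⁻¹ * (√(2 * π * s))⁻¹ *
          exp (-(ℓ - b) ^ 2 / (2 * (t - s)) + -b ^ 2 / (2 * s)) := by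
        rw [← hexponent, exp_add]
        simp only [ne_eq, OfNat.ofNat_ne_zero, not_false_eq_true, zero_pow, neg_zero, zero_div,
          exp_zero, mul_one]
        ring
    _ ≤ (√(2 * π * (t - s)))⁻¹ * (√(2 * π * s))⁻¹ *
          exp (-(ℓ - b) ^ 2 / (2 * (t - s)) + -b ^ 2 / (2 * s)) := by
        gcongr
        linarith
    _ = _ := by
        rw [exp_add]
        ring

lemma mul_le_intervalIntegral_of_le_on_Icc {f : ℝ → ℝ} {a a' c m : ℝ} (haa' : a ≤ a')
    (ha'c : a' ≤ c) (hf : IntervalIntegrable f volume a c) (hf0 : ∀ x ∈ Icc a c, 0 ≤ f x)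
    (hm : ∀ x ∈ Icc a' c, m ≤ f x) : (c - a') * m ≤ ∫ x in a..c, f x := by
  calc (c - a') * m = ∫ _ in a'..c, m := by simp
    _ ≤ ∫ x in a'..c, f x :=
        integral_mono_on ha'c intervalIntegrable_const (hf.mono_set (by
          rw [uIcc_of_le ha'c, uIcc_of_le (haa'.trans ha'c)]; exact Icc_subset_Icc_left haa')) hm
    _ ≤ ∫ x in a..c, f x :=
        integral_mono_interval haa' ha'c le_rfl
          (ae_restrict_of_forall_mem measurableSet_Ioc fun x hx => hf0 x (Ioc_subset_Icc_self hx))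
          hf

lemma continuousOn_heatKernel_mul_fpd (b ℓ t : ℝ) :
    ContinuousOn (fun s => heatKernel 1 (t - s) (ℓ - b) * fpd b s) (Ioo 0 t) := by
  refine ContinuousOn.mul ?_ ?_
  · exact (continuousOn_heatKernel 1 (ℓ - b)).comp (by fun_prop)
      fun s hs => by simpa using hs.2
  · exact (continuousOn_const.div continuousOn_id fun s hs => hs.1.ne').mul
      ((continuousOn_heatKernel 1 b).mono Ioo_subset_Ioi_self)

lemma heatKernel_mul_fpd_nonneg {b ℓ t s : ℝ} (hb : 0 ≤ b) (hs : s ∈ Icc 0 t) :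
    0 ≤ heatKernel 1 (t - s) (ℓ - b) * fpd b s :=
  mul_nonneg (heatKernel_nonneg 1 (by linarith [hs.2]) _)
    (mul_nonneg (div_nonneg hb hs.1) (heatKernel_nonneg 1 hs.1 _))

lemma sq_mul_sub_le_of_mem_Icc {ℓ t d ε s : ℝ} (hd : 0 ≤ d) (hdt : 2 * d ≤ t) (hε : ε ≤ 1 / 2)
    (hεℓ : ε ^ 2 * ℓ ^ 2 * d ≤ t ^ 2) (hs : s ∈ Icc (d - ε * d) d) :
    ℓ ^ 2 * (d - s) ^ 2 ≤ 4 * t * s * (t - s) := by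
  obtain ⟨hs₁, hs₂⟩ := hs
  have hεd : 0 ≤ ε * d := by linarith
  have hs_ge : d / 2 ≤ s := by nlinarith
  have ht : 0 ≤ t := by linarith
  calc ℓ ^ 2 * (d - s) ^ 2 ≤ ℓ ^ 2 * (ε * d) ^ 2 := by gcongr; linarith
    _ = d * (ε ^ 2 * ℓ ^ 2 * d) := by ring
    _ ≤ d * t ^ 2 := by gcongr
    _ = 4 * t * (d / 2) * (t / 2) := by ring
    _ ≤ 4 * t * s * (t - s) := by gcongr <;> nlinarith

lemma le_heatKernel_mul_fpd {b ℓ t d ε s : ℝ} (hb : 0 < b) (hbℓ : 2 * b ≤ ℓ) (ht : 0 < t)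
    (hd : ℓ * d = b * t) (hε : ε ≤ 1 / 2) (hεbℓ : ε ^ 2 * (b * ℓ) ≤ t)
    (hs : s ∈ Icc (d - ε * d) d) :
    ℓ / t * exp (-2) * heatKernel 1 d 0 * heatKernel 1 t ℓ ≤
      heatKernel 1 (t - s) (ℓ - b) * fpd b s := by
  have hℓ : 0 < ℓ := by linarith
  have hd0 : 0 < d := pos_of_mul_pos_right (hd ▸ mul_pos hb ht) hℓ.le
  have hdt : 2 * d ≤ t := le_of_mul_le_mul_left (by nlinarith) hℓ
  have hεℓ : ε ^ 2 * ℓ ^ 2 * d ≤ t ^ 2 := by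
    calc ε ^ 2 * ℓ ^ 2 * d = ε ^ 2 * (b * ℓ) * t := by linear_combination ε ^ 2 * ℓ * hd
      _ ≤ t * t := by gcongr
      _ = t ^ 2 := (sq t).symm
  have hs0 : 0 < s := by nlinarith [hs.1]
  have hst : s < t := by linarith [hs.2]
  have hts : 0 < t - s := sub_pos.2 hst
  have hgap : exp (-2) ≤ exp (-(b * t - ℓ * s) ^ 2 / (2 * t * s * (t - s))) := by
    rw [exp_le_exp, show b * t - ℓ * s = ℓ * (d - s) by rw [← hd]; ring,
      le_div_iff₀ (by positivity)]
    nlinarith [sq_mul_sub_le_of_mem_Icc hd0.le hdt hε hεℓ hs]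
  have hrate : ℓ / t ≤ b / s := by
    rw [div_le_div_iff₀ ht hs0]
    nlinarith [hs.2]
  have hpeak := heatKernel_zero_antitoneOn 1 hs0 hd0 hs.2
  have hpd := heatKernel_nonneg 1 hd0.le 0
  have hpt := heatKernel_nonneg 1 ht.le ℓ
  calc ℓ / t * exp (-2) * heatKernel 1 d 0 * heatKernel 1 t ℓ
      ≤ b / s * (heatKernel 1 t ℓ * heatKernel 1 s 0 *
          exp (-(b * t - ℓ * s) ^ 2 / (2 * t * s * (t - s)))) := by
        rw [show ∀ x y z w : ℝ, x * (y * z * w) = x * w * z * y by intros; ring]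
        gcongr
    _ ≤ b / s * (heatKernel 1 (t - s) (ℓ - b) * heatKernel 1 s b) :=
        mul_le_mul_of_nonneg_left (heatKernel_mul_heatKernel_ge hs0 hst b ℓ) (by positivity)
    _ = heatKernel 1 (t - s) (ℓ - b) * fpd b s := by
        rw [fpd]
        ring

lemma integral_heatKernel_mul_fpd_ge {b ℓ t d ε : ℝ} (hb : 0 < b) (hbℓ : 2 * b ≤ ℓ) (ht : 0 < t)
    (hd : ℓ * d = b * t) (hε₀ : 0 ≤ ε) (hε : ε ≤ 1 / 2) (hεbℓ : ε ^ 2 * (b * ℓ) ≤ t) :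
    ε * b * exp (-2) * heatKernel 1 d 0 * heatKernel 1 t ℓ ≤
      ∫ s in (d / 2)..d, heatKernel 1 (t - s) (ℓ - b) * fpd b s := by
  have hℓ : 0 < ℓ := by linarith
  have hd0 : 0 < d := pos_of_mul_pos_right (hd ▸ mul_pos hb ht) hℓ.le
  have hdt : d < t := lt_of_mul_lt_mul_left (by nlinarith) hℓ.le
  have hint : IntervalIntegrable (fun s => heatKernel 1 (t - s) (ℓ - b) * fpd b s) volume
      (d / 2) d :=
    ((continuousOn_heatKernel_mul_fpd b ℓ t).mono (by
      rw [uIcc_of_le (by linarith)]; exact Icc_subset_Ioo (by positivity) hdt)).intervalIntegrable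
  calc ε * b * exp (-2) * heatKernel 1 d 0 * heatKernel 1 t ℓ
      = (d - (d - ε * d)) * (ℓ / t * exp (-2) * heatKernel 1 d 0 * heatKernel 1 t ℓ) := by
        have hmass : (d - (d - ε * d)) * (ℓ / t) = ε * b := by
          rw [sub_sub_cancel, mul_assoc, mul_div_assoc', mul_comm d ℓ, hd]
          field_simp
        rw [← hmass]
        ring
    _ ≤ _ := mul_le_intervalIntegral_of_le_on_Icc (by nlinarith) (by nlinarith) hint
        (fun s hs => heatKernel_mul_fpd_nonneg hb.le ⟨by linarith [hs.1], by linarith [hs.2]⟩)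
        fun s hs => le_heatKernel_mul_fpd hb hbℓ ht hd hε hεbℓ hs

lemma mul_heatKernel_one_zero {b ℓ t : ℝ} (hb : 0 < b) (hℓ : 0 < ℓ) (ht : 0 < t) :
    b * heatKernel 1 (b / ℓ * t) 0 = √(b * ℓ / t) / √(2 * π) := by
  have hsqrt : √(b * ℓ / t) = b / √(b / ℓ * t) := by
    rw [eq_div_iff (by positivity), ← sqrt_mul (by positivity),
      show b * ℓ / t * (b / ℓ * t) = b ^ 2 by field_simp, sqrt_sq hb.le]
  rw [heatKernel_one_eq (by positivity), sq, zero_mul, neg_zero, zero_div, exp_zero, mul_one,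
    hsqrt, sqrt_mul (by positivity)]
  field_simp

lemma min_one_div_two_le_min_inv_mul {r : ℝ} (hr : 0 < r) : min 1 r / 2 ≤ min (1 / 2) r⁻¹ * r := by
  rw [min_mul_of_nonneg _ _ hr.le, inv_mul_cancel₀ hr.ne']
  exact le_min (by linarith [min_le_right 1 r]) (by linarith [min_le_left 1 r])

/-- The Brownian bridge probability `P[ρ₁t/2 < T_b < ρ₁t | X_0 = 0, X_t = ℓ]`, written as
`(∫_{ρ₁t/2}^{ρ₁t} p^{(1)}_{t-s}(ℓ-b) q(b,s) ds) / p^{(1)}_t(ℓ)`, is at least c·min(1,√(bℓ/t)). -/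
theorem stmt4 : ∃ c : ℝ, 0 < c ∧ ∀ b ℓ t : ℝ, 0 < b → b < ℓ → b / ℓ ≤ 1 / 2 → 0 < t →
    c * min 1 (Real.sqrt (b * ℓ / t)) * heatKernel 1 t ℓ ≤
      ∫ s in (b / ℓ * t / 2)..(b / ℓ * t), heatKernel 1 (t - s) (ℓ - b) * fpd b s := by
  refine ⟨exp (-2) / (2 * √(2 * π)), by positivity, fun b ℓ t hb hbℓ hρ ht => ?_⟩
  have hℓ : 0 < ℓ := hb.trans hbℓ
  set r := √(b * ℓ / t)
  have hr : 0 < r := by positivity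
  set ε := min (1 / 2) r⁻¹
  have hε₀ : 0 ≤ ε := le_min (by norm_num) (inv_nonneg.2 hr.le)
  have hεbℓ : ε ^ 2 * (b * ℓ) ≤ t := by
    have hεr : ε * r ≤ 1 := (mul_le_mul_of_nonneg_right (min_le_right _ _) hr.le).trans
      (inv_mul_cancel₀ hr.ne').le
    calc ε ^ 2 * (b * ℓ) = (ε * r) ^ 2 * t := by
          rw [mul_pow, sq_sqrt (by positivity)]; field_simp
      _ ≤ t := mul_le_of_le_one_left ht.le (pow_le_one₀ (by positivity) hεr)
  have hpℓ := heatKernel_nonneg 1 ht.le ℓ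
  calc exp (-2) / (2 * √(2 * π)) * min 1 r * heatKernel 1 t ℓ
      = exp (-2) / √(2 * π) * (min 1 r / 2) * heatKernel 1 t ℓ := by ring
    _ ≤ exp (-2) / √(2 * π) * (ε * r) * heatKernel 1 t ℓ := by
        gcongr
        exact min_one_div_two_le_min_inv_mul hr
    _ = ε * b * exp (-2) * heatKernel 1 (b / ℓ * t) 0 * heatKernel 1 t ℓ := by
        linear_combination -(ε * exp (-2) * heatKernel 1 t ℓ) * mul_heatKernel_one_zero hb hℓ ht
    _ ≤ _ := integral_heatKernel_mul_fpd_ge (d := b / ℓ * t) hb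
          (by rw [div_le_iff₀ hℓ] at hρ; linarith) ht (by field_simp) hε₀ (min_le_left _ _) hεbℓ
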